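/- Let ρ₀(x) = (-1)^{Q(x)}, ρ₁(y) = (-1)^{Q(y)+|y|}, and σ(x) = √2 (-1)^{Q(x)} for |x| even, σ(x) = 0 for |x| odd. Then for all x, y ∈ {0,1}^n: ρ₀(x)ρ₁(y)σ(x+y) = √2 · (-1)^{x·y} when |x+y| is even, and ρ₀(x)ρ₁(y)σ(x+y) = 0 when |x+y| is odd. -/

import Mathlib

/-! The signs only see Hamming weights: `Q x = |x|(|x| - 1)/2` and
`|x + y| = |x| + |y| - 2 x·y`. Hence the exponent `Q x + Q y + |y| + Q (x + y) + x·y` is a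
quadratic expression in `|x|, |y|, x·y`, and it is even as soon as `|x + y|` is, since then
`|x| ≡ |y| (mod 2)`. -/

open Finset Real

/-- numeric value of a bit -/
def bit (b : Bool) : ℕ := if b then 1 else 0

/-- quadratic function Q(x) = Σ_{i<j} x_i x_j -/
def Q {n : ℕ} (x : Fin n → Bool) : ℕ :=
  ∑ i : Fin n, ∑ j : Fin n, if i < j then bit (x i) * bit (x j) else 0

/-- Hamming weight -/
def wt {n : ℕ} (x : Fin n → Bool) : ℕ := ∑ i : Fin n, bit (x i)

/-- inner product (before reduction mod 2) -/
def ip {n : ℕ} (x y : Fin n → Bool) : ℕ := ∑ i : Fin n, bit (x i) * bit (y i)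

/-- bitwise XOR -/
def xorv {n : ℕ} (x y : Fin n → Bool) : Fin n → Bool := fun i => xor (x i) (y i)

noncomputable def σeven {n : ℕ} (x : Fin n → Bool) : ℝ :=
  if Even (wt x) then Real.sqrt 2 * (-1 : ℝ) ^ (Q x) else 0

theorem sum_mul_sum_eq_two_mul_sum_lt_add_sum {ι R : Type*} [Fintype ι] [LinearOrder ι]
    [CommSemiring R] (f : ι → R) :
    (∑ i, f i) * ∑ j, f j =
      2 * ∑ i, ∑ j, (if i < j then f i * f j else 0) + ∑ i, f i * f i := by
  have split : ∀ i j, f i * f j = (if i < j then f i * f j else 0) +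
      (if j < i then f j * f i else 0) + (if i = j then f i * f i else 0) := by
    intro i j
    rcases lt_trichotomy i j with h | rfl | h
    · simp [h, h.not_gt, h.ne]
    · simp
    · simp [h, h.not_gt, h.ne', mul_comm]
  rw [sum_mul_sum, sum_congr rfl fun i _ => sum_congr rfl fun j _ => split i j]
  simp only [sum_add_distrib, sum_ite_eq, mem_univ, if_true]
  rw [sum_comm (f := fun i j => if j < i then f j * f i else 0)]
  ring

theorem bit_mul_self (b : Bool) : bit b * bit b = bit b := by
  cases b <;> rfl

theorem two_mul_Q_add_wt {n : ℕ} (x : Fin n → Bool) : 2 * Q x + wt x = wt x * wt x := by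
  simp only [Q, wt, sum_mul_sum_eq_two_mul_sum_lt_add_sum, bit_mul_self]

theorem wt_xorv_add_two_mul_ip {n : ℕ} (x y : Fin n → Bool) :
    wt (xorv x y) + 2 * ip x y = wt x + wt y := by
  have bitwise (a b : Bool) : bit (xor a b) + 2 * (bit a * bit b) = bit a + bit b := by
    cases a <;> cases b <;> rfl
  simp only [wt, ip, xorv, mul_sum, ← sum_add_distrib, bitwise]

theorem even_of_two_mul_add_eq_mul_self {a b s k qa qb qs : ℕ} (ha : 2 * qa + a = a * a)
    (hb : 2 * qb + b = b * b) (hs : 2 * qs + s = s * s) (hk : s + 2 * k = a + b)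
    (hs_even : Even s) : Even (qa + (qb + b) + qs + k) := by
  obtain ⟨m, rfl⟩ := hs_even
  rw [← Int.even_coe_nat]
  zify at *
  have hb' : (b : ℤ) = 2 * (m + k) - a := by linarith
  rw [hb'] at hb ⊢
  -- with `s = 2m` and `b = 2(m + k) - a`, the sum is twice this integer
  refine ⟨qa - (m + k) * a + (m + k) ^ 2 + m ^ 2 + k, ?_⟩
  have htwice : 2 * ((qa : ℤ) + (qb + (2 * (m + k) - a)) + qs + k) =
      2 * (2 * (qa - (m + k) * a + (m + k) ^ 2 + m ^ 2 + k)) := by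
    linear_combination -ha + hb + hs
  linarith

theorem rho_sigma_even {n : ℕ} (x y : Fin n → Bool) :
    (Even (wt (xorv x y)) →
      ((-1 : ℝ) ^ (Q x)) * ((-1 : ℝ) ^ (Q y + wt y)) * σeven (xorv x y)
        = Real.sqrt 2 * (-1 : ℝ) ^ (ip x y)) ∧
    (Odd (wt (xorv x y)) →
      ((-1 : ℝ) ^ (Q x)) * ((-1 : ℝ) ^ (Q y + wt y)) * σeven (xorv x y) = 0) := by
  refine ⟨fun he => ?_, fun ho => ?_⟩
  · have hexp : Even (Q x + (Q y + wt y) + Q (xorv x y) + ip x y) :=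
      even_of_two_mul_add_eq_mul_self (two_mul_Q_add_wt x) (two_mul_Q_add_wt y)
        (two_mul_Q_add_wt (xorv x y)) (wt_xorv_add_two_mul_ip x y) he
    rw [σeven, if_pos he, mul_left_comm, ← pow_add, ← pow_add]
    exact congrArg _ (neg_one_pow_congr (Nat.even_add.mp hexp))
  · rw [σeven, if_neg (Nat.not_even_iff_odd.mpr ho), mul_zero]
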